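/- Let G be a complete multipartite graph and 𝒢 the G-join with complete graphs K_{p_y}, with N total vertices, and let block K_{p_l} belong to part r covering N_r vertices. If p_l ≥ 2, then for any two distinct vertices u, w in the block K_{p_l}, the vector equal to 1 at u, -1 at w, and 0 elsewhere is an eigenvector of the Laplacian L(𝒢) with eigenvalue N - N_r + p_l. -/
import Mathlib

open Matrix
open scoped Classical

/-- The `G`-join over a complete multipartite base graph, with complete graphs as blocks:
vertices carry a `part` (the independent part of the complete multipartite base graph) and a
`block` (the vertex of the base graph, i.e. the complete graph replacing it); two distinct
vertices are adjacent iff they lie in different parts, or in the same block. -/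
def multipartiteJoin {V : Type*} {s : ℕ} {β : Type*}
    (part : V → Fin s) (block : V → β) : SimpleGraph V :=
  SimpleGraph.fromRel (fun u w => part u ≠ part w ∨ block u = block w)

lemma multipartiteJoin_adj {V : Type*} {s : ℕ} {β : Type*}
    (part : V → Fin s) (block : V → β) (x y : V) :
    (multipartiteJoin part block).Adj x y ↔
      x ≠ y ∧ (part x ≠ part y ∨ block x = block y) := by
  simp only [multipartiteJoin, SimpleGraph.fromRel_adj]
  constructor
  · rintro ⟨h, h2 | h2⟩ <;> [exact ⟨h, h2⟩;
      exact ⟨h, by rcases h2 with h2 | h2; exacts [Or.inl (Ne.symm h2), Or.inr h2.symm]⟩]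
  · rintro ⟨h, h2⟩; exact ⟨h, Or.inl h2⟩

lemma multipartiteJoin_degree {V : Type*} [Fintype V] [DecidableEq V]
    {s : ℕ} {β : Type*} [DecidableEq β] (part : V → Fin s) (block : V → β)
    (hblock : ∀ u w : V, block u = block w → part u = part w)
    (r : Fin s) (l : β) (u v : V) (hu : block u = l) (hr : part u = r)
    (hv : block v = l) :
    ((multipartiteJoin part block).degree v : ℝ) =
      (Fintype.card V : ℝ) - (Fintype.card {x : V // part x = r} : ℝ)
        + (Fintype.card {x : V // block x = l} : ℝ) - 1 := by
  have hvr : part v = r := (hblock v u (hv.trans hu.symm)).trans hr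
  set S1 : Finset V := Finset.univ.filter (fun y => ¬ part y = r) with hS1
  set S2 : Finset V := Finset.univ.filter (fun y => block y = l) with hS2
  have hNF : (multipartiteJoin part block).neighborFinset v = S1 ∪ S2.erase v := by
    ext y
    simp only [SimpleGraph.mem_neighborFinset, multipartiteJoin_adj, hS1, hS2,
      Finset.mem_union, Finset.mem_erase, Finset.mem_filter, Finset.mem_univ, true_and,
      hvr, hv]
    constructor
    · rintro ⟨hne, h | h⟩
      · exact Or.inl (fun hc => h hc.symm)
      · exact Or.inr ⟨Ne.symm hne, h.symm⟩
    · rintro (h | ⟨hne, h⟩)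
      · exact ⟨fun hc => h (hc ▸ hvr), Or.inl (fun hc => h hc.symm)⟩
      · exact ⟨Ne.symm hne, Or.inr h.symm⟩
  have hdisj : Disjoint S1 (S2.erase v) := by
    rw [Finset.disjoint_left]
    intro a ha ha2
    rw [hS1, Finset.mem_filter] at ha
    have : block a = l := (Finset.mem_filter.mp (Finset.mem_of_mem_erase ha2)).2
    exact ha.2 ((hblock a u (this.trans hu.symm)).trans hr)
  have hvS2 : v ∈ S2 := by simp [hS2, hv]
  have hS2pos : 1 ≤ S2.card := Finset.card_pos.mpr ⟨v, hvS2⟩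
  have hc1 : S1.card + (Finset.univ.filter (fun y => part y = r)).card = Fintype.card V := by
    rw [add_comm]
    simpa using Finset.card_filter_add_card_filter_not
      (s := Finset.univ) (p := fun y => part y = r)
  have hcard : (multipartiteJoin part block).degree v = S1.card + (S2.card - 1) := by
    rw [SimpleGraph.degree, hNF, Finset.card_union_of_disjoint hdisj,
      Finset.card_erase_of_mem hvS2]
  have hsub : Fintype.card {x : V // part x = r} =
      (Finset.univ.filter (fun y => part y = r)).card := Fintype.card_subtype _
  have hsub2 : Fintype.card {x : V // block x = l} = S2.card := Fintype.card_subtype _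
  rw [hcard, hsub, hsub2, ← hc1]
  push_cast [Nat.cast_sub hS2pos]
  ring

/-- In the `G`-join `𝒢` of complete graphs over a complete multipartite graph: for two distinct
vertices `u`, `w` in the same block `l` (belonging to part `r`), the vector `e_u - e_w` is an
eigenvector of the Laplacian `L(𝒢)` with eigenvalue `N - N_r + pₗ`, where `pₗ` is the size of
block `l`, `N_r` that of part `r` and `N` the total number of vertices. -/
theorem multipartiteJoin_block_eigenvector {V : Type*} [Fintype V] [DecidableEq V]
    {s : ℕ} {β : Type*} [DecidableEq β] (part : V → Fin s) (block : V → β)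
    (hblock : ∀ u w : V, block u = block w → part u = part w)
    (r : Fin s) (l : β) (u w : V) (huw : u ≠ w)
    (hu : block u = l) (hw : block w = l) (hr : part u = r) :
    (multipartiteJoin part block).lapMatrix ℝ *ᵥ
        (fun x => if x = u then (1 : ℝ) else if x = w then -1 else 0) =
      ((Fintype.card V : ℝ) - (Fintype.card {x : V // part x = r} : ℝ)
          + (Fintype.card {x : V // block x = l} : ℝ)) •
        (fun x => if x = u then (1 : ℝ) else if x = w then -1 else 0) := by
  set G := multipartiteJoin part block with hG
  set vec : V → ℝ := fun x => if x = u then (1 : ℝ) else if x = w then -1 else 0 with hvec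
  have hwr : part w = r := (hblock w u (hw.trans hu.symm)).trans hr
  have hsum : ∀ x : V, ∑ y ∈ G.neighborFinset x, vec y =
      (if G.Adj x u then (1:ℝ) else 0) + (if G.Adj x w then (-1:ℝ) else 0) := by
    intro x
    have hv : ∀ y : V, vec y = (if y = u then (1:ℝ) else 0) + (if y = w then (-1:ℝ) else 0) := by
      intro y
      simp only [hvec]
      by_cases h1 : y = u <;> by_cases h2 : y = w
      · exact absurd (h1 ▸ h2) huw
      all_goals simp [h1, h2, huw, Ne.symm huw]
    simp_rw [hv, Finset.sum_add_distrib, Finset.sum_ite_eq', SimpleGraph.mem_neighborFinset]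
  have hadjuw : G.Adj u w := by
    rw [hG, multipartiteJoin_adj]
    exact ⟨huw, Or.inr (hu.trans hw.symm)⟩
  funext x
  rw [SimpleGraph.lapMatrix_mulVec_apply, hsum]
  by_cases hxu : x = u
  · subst hxu
    rw [multipartiteJoin_degree part block hblock r l x x hu hr hu]
    simp only [hvec, Pi.smul_apply, smul_eq_mul, if_neg (G.irrefl), if_pos hadjuw,
      if_pos (rfl : x = x), if_true]
    ring
  · by_cases hxw : x = w
    · subst hxw
      rw [multipartiteJoin_degree part block hblock r l u x hu hr hw]
      simp only [hvec, Pi.smul_apply, smul_eq_mul, if_neg (Ne.symm huw),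
        if_pos (rfl : x = x), if_true, if_pos hadjuw.symm, if_neg (G.irrefl)]
      ring
    · have hiff : G.Adj x u ↔ G.Adj x w := by
        rw [hG, multipartiteJoin_adj, multipartiteJoin_adj, hu, hw, hr, hwr]
        simp [hxu, hxw]
      simp only [hvec, if_neg hxu, if_neg hxw, Pi.smul_apply, smul_eq_mul, mul_zero]
      by_cases h : G.Adj x u
      · rw [if_pos h, if_pos (hiff.mp h)]; ring
      · rw [if_neg h, if_neg (fun hc => h (hiff.mpr hc))]; ring
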